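/- arXiv:1301.6144 — 2 statements merged into one kernel-verified Lean document; each statement's English description precedes it below -/
import Mathlib

section
/- Let H be a complex separable infinite-dimensional Hilbert space and let T be a bounded linear operator on H for which there exists an increasing sequence (M_n)_{n ≥ 0} of closed subspaces of H such that each M_n is infinite-dimensional, M_n has infinite codimension in M_{n+1} for each n ≥ 0, ∪_{n ≥ 0} M_n is dense in H, and HC(T)^c = ∪_{n ≥ 0} M_n. Let (E_n)_{n ≥ 0} be any sequence of closed subspaces of H satisfying: (1) E_n ⊆ E_{n+1} for each n ≥ 0; (2) each E_n is infinite-dimensional and has infinite codimension as a subspace of E_{n+1}; (3) ∪_{n ≥ 0} E_n is dense in H. Then there exists a unitary operator U on H such that HC(U T U^{-1})^c = ∪_{n ≥ 0} E_n. -/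
/-!
Each flag `(M n)` admits an adapted Hilbert basis indexed by `ℕ × ℕ`: its `k`-th row is a Hilbert
basis of the orthogonal difference `M k ⊖ M (k - 1)`, which is closed, separable and (by the
codimension hypothesis) infinite dimensional, and density of `⋃ n, M n` makes the rows together
complete. Then `x ∈ M n` exactly when the coordinates of `x` vanish beyond row `n`. The unitary
carrying the adapted basis of `(M n)` to that of `(E n)` maps each `M n` onto `E n`, and conjugation
by a homeomorphism transports orbits, hence non-hypercyclic vectors.
-/

open Submodule Set Function TopologicalSpace

section HilbertBasis

variable {𝕜 E : Type*} [RCLike 𝕜] [NormedAddCommGroup E] [InnerProductSpace 𝕜 E]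

/-- Distinct vectors are at distance `√2`, so the balls of radius `1/2` around them are disjoint. -/
theorem Orthonormal.countable [SeparableSpace E] {ι : Type*} {v : ι → E}
    (hv : Orthonormal 𝕜 v) : Countable ι := by
  refine Pairwise.countable_of_isOpen_disjoint (s := fun i => Metric.ball (v i) 2⁻¹)
    (fun i j hij => Metric.ball_disjoint_ball ?_) (fun _ => Metric.isOpen_ball)
    (fun _ => Metric.nonempty_ball.2 (by norm_num))
  have hsq : ‖v i - v j‖ ^ 2 = 2 := by
    rw [@norm_sub_sq 𝕜, hv.inner_eq_zero hij, hv.1 i, hv.1 j]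
    norm_num
  rw [dist_eq_norm]
  nlinarith [norm_nonneg (v i - v j)]

variable (𝕜 E) in
theorem exists_hilbertBasis_nat [CompleteSpace E] [SeparableSpace E]
    (h : ¬ FiniteDimensional 𝕜 E) : Nonempty (HilbertBasis ℕ 𝕜 E) := by
  obtain ⟨w, b, -⟩ := exists_hilbertBasis 𝕜 E
  have : Countable w := b.orthonormal.countable
  have : Infinite w := by
    by_contra hfin
    have : Fintype w := @Fintype.ofFinite w (not_infinite_iff_finite.1 hfin)
    exact h (Module.Finite.of_basis b.toOrthonormalBasis.toBasis)
  obtain ⟨_⟩ := nonempty_denumerable w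
  let e : ℕ ≃ w := (Denumerable.eqv w).symm
  refine ⟨HilbertBasis.mk (b.orthonormal.comp e e.injective) ?_⟩
  rw [e.surjective.range_comp, b.dense_span]

theorem HilbertBasis.le_topologicalClosure_span_coe {ι : Type*} {K : Submodule 𝕜 E}
    (b : HilbertBasis ι 𝕜 K) :
    K ≤ (span 𝕜 (range fun i => (b i : E))).topologicalClosure := by
  intro x hx
  have h := (span 𝕜 (range b)).topologicalClosure_map K.subtypeL
  rw [b.dense_span, map_span, ← range_comp] at h
  exact h ⟨⟨x, hx⟩, trivial, rfl⟩

theorem HilbertBasis.mem_of_forall_repr_eq_zero {ι : Type*} (b : HilbertBasis ι 𝕜 E)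
    {K : Submodule 𝕜 E} (hK : IsClosed (K : Set E)) {x : E}
    (hx : ∀ i, b i ∉ K → b.repr x i = 0) : x ∈ K := by
  refine hK.mem_of_tendsto (b.hasSum_repr x) (Filter.Eventually.of_forall fun s =>
    K.sum_mem fun i _ => ?_)
  by_cases hi : b i ∈ K
  · exact K.smul_mem _ hi
  · simp [hx i hi]

end HilbertBasis

theorem Submodule.finite_quotient_of_le_sup {R M : Type*} [Ring R] [AddCommGroup M] [Module R M]
    {p q r : Submodule R M} (hq : q ≤ p ⊔ r) (hr : r ≤ q) [Module.Finite R r] :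
    Module.Finite R (q ⧸ comap q.subtype p) := by
  refine Module.Finite.of_surjective ((comap q.subtype p).mkQ ∘ₗ inclusion hr) fun y => ?_
  obtain ⟨y, rfl⟩ := Quotient.mk_surjective _ y
  obtain ⟨a, ha, c, hc, hac⟩ := mem_sup.1 (hq y.2)
  refine ⟨⟨c, hc⟩, (Quotient.eq _).2 ?_⟩
  show (c : M) - y ∈ p
  rw [← hac, sub_add_cancel_right]
  exact neg_mem ha

section Flag

variable {𝕜 E : Type*} [RCLike 𝕜] [NormedAddCommGroup E] [InnerProductSpace 𝕜 E]
  {M : ℕ → Submodule 𝕜 E}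

def flagPiece (M : ℕ → Submodule 𝕜 E) : ℕ → Submodule 𝕜 E
  | 0 => M 0
  | k + 1 => (M k)ᗮ ⊓ M (k + 1)

theorem flagPiece_le (k : ℕ) : flagPiece M k ≤ M k := by
  cases k
  · exact le_rfl
  · exact inf_le_right

theorem isClosed_flagPiece (hM : ∀ n, IsClosed (M n : Set E)) (k : ℕ) :
    IsClosed (flagPiece M k : Set E) := by
  cases k
  · exact hM 0
  · exact (M _).isClosed_orthogonal.inter (hM _)

theorem isOrtho_flagPiece (hM : Monotone M) {n k : ℕ} (h : n < k) : M n ⟂ flagPiece M k := by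
  obtain ⟨k, rfl⟩ : ∃ m, k = m + 1 := ⟨k - 1, by omega⟩
  exact (isOrtho_orthogonal_right (M k)).mono (hM (Nat.le_of_lt_succ h)) inf_le_left

theorem pairwise_isOrtho_flagPiece (hM : Monotone M) :
    Pairwise fun k l => flagPiece M k ⟂ flagPiece M l := by
  intro k l hkl
  rcases hkl.lt_or_gt with h | h
  · exact (isOrtho_flagPiece hM h).mono_left (flagPiece_le k)
  · exact ((isOrtho_flagPiece hM h).mono_left (flagPiece_le l)).symm

theorem sup_flagPiece_succ [CompleteSpace E] (hM : ∀ n, IsClosed (M n : Set E))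
    (hmono : Monotone M) (n : ℕ) : M n ⊔ flagPiece M (n + 1) = M (n + 1) :=
  have : CompleteSpace (M n) := (hM n).completeSpace_coe
  sup_orthogonal_inf_of_hasOrthogonalProjection (hmono n.le_succ)

theorem flag_le_of_forall_flagPiece_le [CompleteSpace E] (hM : ∀ n, IsClosed (M n : Set E))
    (hmono : Monotone M) {S : Submodule 𝕜 E} {n : ℕ} (hS : ∀ k ≤ n, flagPiece M k ≤ S) :
    M n ≤ S := by
  induction n with
  | zero => exact hS 0 le_rfl
  | succ n ih =>
    rw [← sup_flagPiece_succ hM hmono n]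
    exact sup_le (ih fun k hk => hS k (hk.trans n.le_succ)) (hS _ le_rfl)

theorem not_finiteDimensional_flagPiece [CompleteSpace E] (hM : ∀ n, IsClosed (M n : Set E))
    (hmono : Monotone M) (h0 : ¬ FiniteDimensional 𝕜 (M 0))
    (hcodim : ∀ n, ¬ FiniteDimensional 𝕜 (M (n + 1) ⧸ comap (M (n + 1)).subtype (M n)))
    (k : ℕ) : ¬ FiniteDimensional 𝕜 (flagPiece M k) := by
  cases k with
  | zero => exact h0
  | succ n =>
    intro hfin
    exact hcodim n (finite_quotient_of_le_sup (sup_flagPiece_succ hM hmono n).ge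
      (flagPiece_le (n + 1)))

/-- The `k`-th row of the basis is a Hilbert basis of `flagPiece M k`. -/
theorem exists_hilbertBasis_adapted_to_flag [CompleteSpace E] [SeparableSpace E]
    (hM : ∀ n, IsClosed (M n : Set E)) (hmono : ∀ n, M n ≤ M (n + 1))
    (h0 : ¬ FiniteDimensional 𝕜 (M 0))
    (hcodim : ∀ n, ¬ FiniteDimensional 𝕜 (M (n + 1) ⧸ comap (M (n + 1)).subtype (M n)))
    (hdense : Dense (⋃ n, (M n : Set E))) :
    ∃ b : HilbertBasis (ℕ × ℕ) 𝕜 E,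
      ∀ n x, x ∈ M n ↔ ∀ p : ℕ × ℕ, n < p.1 → b.repr x p = 0 := by
  have hmono : Monotone M := monotone_nat_of_le_succ hmono
  obtain ⟨c⟩ : Nonempty (∀ k, HilbertBasis ℕ 𝕜 (flagPiece M k)) := ⟨fun k =>
    have : CompleteSpace (flagPiece M k) := (isClosed_flagPiece hM k).completeSpace_coe
    (exists_hilbertBasis_nat 𝕜 _ (not_finiteDimensional_flagPiece hM hmono h0 hcodim k)).some⟩
  let e : ℕ × ℕ → E := fun p => c p.1 p.2
  have he : Orthonormal 𝕜 e :=
    ((orthogonalFamily_iff_pairwise.2 (pairwise_isOrtho_flagPiece hmono)).orthonormal_sigma_orthonormal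
      fun k => (c k).orthonormal).comp _ (Equiv.sigmaEquivProd ℕ ℕ).symm.injective
  have hmem : ∀ p, e p ∈ flagPiece M p.1 := fun p => (c p.1 p.2).2
  set S := (span 𝕜 (range e)).topologicalClosure
  have hpiece : ∀ k, flagPiece M k ≤ S := fun k =>
    (c k).le_topologicalClosure_span_coe.trans <| topologicalClosure_mono <|
      span_mono <| range_subset_iff.2 fun j => ⟨(k, j), rfl⟩
  have hspan : ⊤ ≤ S := fun x _ => closure_minimal
    (iUnion_subset fun n => flag_le_of_forall_flagPiece_le hM hmono fun k _ => hpiece k)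
    (span 𝕜 (range e)).isClosed_topologicalClosure (hdense x)
  refine ⟨HilbertBasis.mk he hspan, fun n x => ⟨fun hx p hp => ?_, fun hx => ?_⟩⟩
  · rw [HilbertBasis.repr_apply_apply, HilbertBasis.coe_mk]
    exact (isOrtho_flagPiece hmono hp).symm.inner_eq (hmem p) hx
  · refine (HilbertBasis.mk he hspan).mem_of_forall_repr_eq_zero (hM n) fun p hp => hx p ?_
    rw [HilbertBasis.coe_mk] at hp
    by_contra hpn
    exact hp (hmono (not_lt.1 hpn) (flagPiece_le p.1 (hmem p)))

end Flag

theorem dense_range_iterate_conj {X Y : Type*} [TopologicalSpace X] [TopologicalSpace Y]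
    (e : X ≃ₜ Y) (f : X → X) (y : Y) :
    Dense (range fun n => (e ∘ f ∘ e.symm)^[n] y) ↔ Dense (range fun n => f^[n] (e.symm y)) := by
  have hsemi : Semiconj e f (e ∘ f ∘ e.symm) := fun x => by simp
  have horbit : (range fun n => (e ∘ f ∘ e.symm)^[n] y) = e '' range fun n => f^[n] (e.symm y) := by
    rw [← range_comp]
    congr 1
    funext n
    rw [comp_apply, (hsemi.iterate_right n).eq, e.apply_symm_apply]
  rw [horbit, e.isDenseEmbedding.dense_image]

theorem ContinuousLinearEquiv.setOf_not_dense_orbit_conj {𝕜 E F : Type*} [Semiring 𝕜]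
    [AddCommMonoid E] [AddCommMonoid F] [Module 𝕜 E] [Module 𝕜 F] [TopologicalSpace E]
    [TopologicalSpace F] (e : E ≃L[𝕜] F) (T : E →L[𝕜] E) :
    {y : F | ¬ Dense (range fun n : ℕ => (((e : E →L[𝕜] F).comp (T.comp (e.symm : F →L[𝕜] E))) ^ n) y)} =
      e.symm ⁻¹' {x | ¬ Dense (range fun n : ℕ => (T ^ n) x)} := by
  simp only [FunLike.coe_pow_eq_iterate]
  exact Set.ext fun y => not_congr (dense_range_iterate_conj e.toHomeomorph T y)

theorem stmt_11_general (H : Type) [NormedAddCommGroup H] [InnerProductSpace ℂ H] [CompleteSpace H]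
    [TopologicalSpace.SeparableSpace H]
    (T : H →L[ℂ] H) (M : ℕ → Submodule ℂ H)
    (hMclosed : ∀ n, IsClosed (M n : Set H))
    (hMmono : ∀ n, M n ≤ M (n + 1))
    (hMinf : ∀ n, ¬ FiniteDimensional ℂ (M n))
    (hMcodim : ∀ n, ¬ FiniteDimensional ℂ
      (↥(M (n + 1)) ⧸ Submodule.comap (M (n + 1)).subtype (M n)))
    (hMdense : Dense (⋃ n, (M n : Set H)))
    (hMHC : {x : H | ¬ Dense (Set.range fun n : ℕ => (T ^ n) x)} = ⋃ n, (M n : Set H))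
    (E : ℕ → Submodule ℂ H)
    (hEclosed : ∀ n, IsClosed (E n : Set H))
    (hEmono : ∀ n, E n ≤ E (n + 1))
    (hEinf : ∀ n, ¬ FiniteDimensional ℂ (E n))
    (hEcodim : ∀ n, ¬ FiniteDimensional ℂ
      (↥(E (n + 1)) ⧸ Submodule.comap (E (n + 1)).subtype (E n)))
    (hEdense : Dense (⋃ n, (E n : Set H))) :
    ∃ U : H ≃ₗᵢ[ℂ] H,
      {x : H | ¬ Dense (Set.range fun n : ℕ =>
        (((U.toContinuousLinearEquiv : H →L[ℂ] H).comp
          (T.comp (U.symm.toContinuousLinearEquiv : H →L[ℂ] H))) ^ n) x)} =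
      ⋃ n, (E n : Set H) := by
  obtain ⟨bM, hbM⟩ := exists_hilbertBasis_adapted_to_flag hMclosed hMmono (hMinf 0) hMcodim hMdense
  obtain ⟨bE, hbE⟩ := exists_hilbertBasis_adapted_to_flag hEclosed hEmono (hEinf 0) hEcodim hEdense
  let U : H ≃ₗᵢ[ℂ] H := bM.repr.trans bE.repr.symm
  have hU : ∀ n x, U.symm x ∈ M n ↔ x ∈ E n := fun n x => by
    rw [hbM, hbE]
    simp [U]
  refine ⟨U, (U.toContinuousLinearEquiv.setOf_not_dense_orbit_conj T).trans ?_⟩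
  rw [hMHC]
  ext x
  simp only [mem_preimage, mem_iUnion, SetLike.mem_coe]
  exact exists_congr fun n => hU n x

/-- Let `T` be a bounded operator on a complex separable infinite-dimensional Hilbert space `H`
whose set of non-hypercyclic vectors is the dense union of an increasing sequence `(M n)` of
infinite-dimensional closed subspaces, each of infinite codimension in the next. Then for any
sequence `(E n)` of closed subspaces with the same three properties, there is a unitary `U` on
`H` such that the set of non-hypercyclic vectors of `U T U⁻¹` is `⋃ n, E n`. -/
theorem stmt_11 (H : Type) [NormedAddCommGroup H] [InnerProductSpace ℂ H] [CompleteSpace H]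
    [TopologicalSpace.SeparableSpace H] (hdim : ¬ FiniteDimensional ℂ H)
    (T : H →L[ℂ] H) (M : ℕ → Submodule ℂ H)
    (hMclosed : ∀ n, IsClosed (M n : Set H))
    (hMmono : ∀ n, M n ≤ M (n + 1))
    (hMinf : ∀ n, ¬ FiniteDimensional ℂ (M n))
    (hMcodim : ∀ n, ¬ FiniteDimensional ℂ
      (↥(M (n + 1)) ⧸ Submodule.comap (M (n + 1)).subtype (M n)))
    (hMdense : Dense (⋃ n, (M n : Set H)))
    (hMHC : {x : H | ¬ Dense (Set.range fun n : ℕ => (T ^ n) x)} = ⋃ n, (M n : Set H))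
    (E : ℕ → Submodule ℂ H)
    (hEclosed : ∀ n, IsClosed (E n : Set H))
    (hEmono : ∀ n, E n ≤ E (n + 1))
    (hEinf : ∀ n, ¬ FiniteDimensional ℂ (E n))
    (hEcodim : ∀ n, ¬ FiniteDimensional ℂ
      (↥(E (n + 1)) ⧸ Submodule.comap (E (n + 1)).subtype (E n)))
    (hEdense : Dense (⋃ n, (E n : Set H))) :
    ∃ U : H ≃ₗᵢ[ℂ] H,
      {x : H | ¬ Dense (Set.range fun n : ℕ =>
        (((U.toContinuousLinearEquiv : H →L[ℂ] H).comp
          (T.comp (U.symm.toContinuousLinearEquiv : H →L[ℂ] H))) ^ n) x)} =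
      ⋃ n, (E n : Set H) :=
  stmt_11_general H T M hMclosed hMmono hMinf hMcodim hMdense hMHC E hEclosed hEmono hEinf hEcodim
    hEdense
end

section
/- Let z_j = 1 − 1/(j+1)² for j ≥ 0, and for w ∈ ℂ with |w| = 1 and n ≥ 0 let B_n(w) = ∏_{j ≥ n} (z_j − w)/(1 − z_j w) (an infinite product, which converges since each factor has modulus 1 and ∑_{j ≥ 0} (1 − z_j) < ∞). Then for every w with |w| = 1 and w ≠ 1, and every n with 1/(n+1)² < |1 − w|, one has |1 − B_n(w)| ≤ (2 / (|1 − w| − 1/(n+1)²)) · ∑_{j ≥ n} 1/(j+1)²; consequently B_n(w) → 1 as n → ∞ for every w on the unit circle with w ≠ 1. -/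
/-!
For real `a` and `|w| = 1` the factor `b_a(w) = (a - w)/(1 - a w)` is unimodular, because
`1 - a w = w · conj (w - a)`, and `1 - b_a(w) = (1 - a)(1 + w)/(1 - a w)` with
`|1 - a w| ≥ |1 - w| - |1 - a|`. For unimodular factors `|1 - ∏ f_i| ≤ ∑ |1 - f_i|`
(telescoping `1 - f g = (1 - f) + f (1 - g)`), which passes to the convergent infinite product
and gives the bound; the tail sums of `∑ 1/(j+1)²` tend to `0`, hence `B_n(w) → 1`.
-/

/-- The points `z j = 1 - 1/(j+1)²` of `(0,1)`. -/
noncomputable def zpt (j : ℕ) : ℝ := 1 - 1 / ((j : ℝ) + 1) ^ 2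

/-- The tail Blaschke product `B n w = ∏_{j ≥ n} (z j - w)/(1 - z j w)`, written as an
infinite product over `j : ℕ` of the factors of index `n + j`. -/
noncomputable def Bprod (n : ℕ) (w : ℂ) : ℂ :=
  ∏' j : ℕ, (((zpt (n + j) : ℝ) : ℂ) - w) / (1 - ((zpt (n + j) : ℝ) : ℂ) * w)

open Filter Topology

section ProdNearOne

variable {ι R : Type*} [NormedCommRing R] {f : ι → R}

theorem Finset.norm_one_sub_prod_le (s : Finset ι) (hf : ∀ i, ‖f i‖ ≤ 1) :
    ‖1 - ∏ i ∈ s, f i‖ ≤ ∑ i ∈ s, ‖1 - f i‖ := by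
  induction s using Finset.cons_induction with
  | empty => simp
  | cons a s _ ih =>
    rw [Finset.prod_cons, Finset.sum_cons]
    calc ‖1 - f a * ∏ i ∈ s, f i‖
        = ‖(1 - f a) + f a * (1 - ∏ i ∈ s, f i)‖ := by congr 1; ring
      _ ≤ ‖1 - f a‖ + ‖f a‖ * ‖1 - ∏ i ∈ s, f i‖ := (norm_add_le _ _).trans (by grw [norm_mul_le])
      _ ≤ ‖1 - f a‖ + ∑ i ∈ s, ‖1 - f i‖ := by grw [hf a, one_mul, ih]

theorem norm_one_sub_tprod_le [NormOneClass R] [CompleteSpace R] (hf : ∀ i, ‖f i‖ ≤ 1)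
    (hs : Summable fun i ↦ ‖1 - f i‖) :
    ‖1 - ∏' i, f i‖ ≤ ∑' i, ‖1 - f i‖ := by
  have hmul : Multipliable f := by
    simpa using multipliable_one_add_of_summable (f := fun i ↦ f i - 1)
      (by simpa only [norm_sub_rev] using hs)
  exact le_of_tendsto (hmul.hasProd.const_sub 1).norm <| .of_forall fun s ↦
    (s.norm_one_sub_prod_le hf).trans (hs.sum_le_tsum s fun i _ ↦ norm_nonneg _)

end ProdNearOne

noncomputable def blaschkeFactor (a : ℝ) (w : ℂ) : ℂ := (a - w) / (1 - a * w)

section BlaschkeFactor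

variable {a : ℝ} {w : ℂ}

theorem norm_one_sub_ofReal_mul (hw : ‖w‖ = 1) : ‖1 - a * w‖ = ‖(a : ℂ) - w‖ := by
  have hconj : w * (starRingEnd ℂ) w = 1 := by
    rw [Complex.mul_conj, Complex.normSq_eq_norm_sq, hw]; norm_num
  have : 1 - a * w = w * (starRingEnd ℂ) (w - a) := by
    rw [map_sub, Complex.conj_ofReal, mul_sub, hconj]; ring
  rw [this, norm_mul, hw, one_mul, RCLike.norm_conj, norm_sub_rev]

theorem norm_blaschkeFactor (hw : ‖w‖ = 1) (ha : |a| < 1) : ‖blaschkeFactor a w‖ = 1 := by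
  have hne : (a : ℂ) - w ≠ 0 := fun h ↦ by
    have := congrArg norm (sub_eq_zero.mp h)
    rw [Complex.norm_real, Real.norm_eq_abs, hw] at this
    exact ha.ne this
  rw [blaschkeFactor, norm_div, norm_one_sub_ofReal_mul hw, div_self (norm_ne_zero_iff.mpr hne)]

theorem norm_one_sub_blaschkeFactor_le (hw : ‖w‖ = 1) (h : |1 - a| < ‖1 - w‖) :
    ‖1 - blaschkeFactor a w‖ ≤ 2 * |1 - a| / (‖1 - w‖ - |1 - a|) := by
  have hden : ‖1 - w‖ - |1 - a| ≤ ‖1 - a * w‖ := by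
    have := norm_sub_le (1 - a * w) (((1 - a : ℝ) : ℂ) * w)
    rw [norm_mul, hw, mul_one, Complex.norm_real, Real.norm_eq_abs,
      show 1 - a * w - ((1 - a : ℝ) : ℂ) * w = 1 - w by push_cast; ring] at this
    linarith
  have hpos : 0 < ‖1 - a * w‖ := (sub_pos.mpr h).trans_le hden
  have hnum : ‖1 + w‖ ≤ 2 := (norm_add_le _ _).trans (by rw [norm_one, hw]; norm_num)
  have hid : 1 - blaschkeFactor a w = ((1 - a : ℝ) : ℂ) * (1 + w) / (1 - a * w) := by
    rw [blaschkeFactor, one_sub_div (norm_pos_iff.mp hpos)]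
    push_cast
    ring
  rw [hid, norm_div, norm_mul, Complex.norm_real, Real.norm_eq_abs, mul_comm 2]
  gcongr

end BlaschkeFactor

theorem one_sub_zpt (j : ℕ) : 1 - zpt j = 1 / ((j : ℝ) + 1) ^ 2 := by
  rw [zpt, sub_sub_cancel]

theorem abs_zpt_lt_one (j : ℕ) : |zpt j| < 1 := by
  have hpos : 0 < 1 / ((j : ℝ) + 1) ^ 2 := by positivity
  have hle : 1 / ((j : ℝ) + 1) ^ 2 ≤ 1 :=
    div_le_one_of_le₀ (one_le_pow₀ (by linarith [j.cast_nonneg (α := ℝ)])) (by positivity)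
  rw [abs_lt, zpt]
  constructor <;> linarith

theorem summable_one_div_nat_add_one_sq :
    Summable fun k : ℕ ↦ 1 / ((k : ℝ) + 1) ^ 2 := by
  simpa using (summable_nat_add_iff 1).mpr
    (Real.summable_one_div_nat_pow.mpr one_lt_two)

theorem norm_one_sub_Bprod_le {w : ℂ} (hw : ‖w‖ = 1) {n : ℕ}
    (hn : 1 / ((n : ℝ) + 1) ^ 2 < ‖1 - w‖) :
    ‖1 - Bprod n w‖ ≤ 2 / (‖1 - w‖ - 1 / ((n : ℝ) + 1) ^ 2) *
      ∑' j : ℕ, 1 / (((n + j : ℕ) : ℝ) + 1) ^ 2 := by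
  set D := ‖1 - w‖ - 1 / ((n : ℝ) + 1) ^ 2
  set t : ℕ → ℝ := fun j ↦ 1 / (((n + j : ℕ) : ℝ) + 1) ^ 2
  have hD : 0 < D := sub_pos.mpr hn
  have ht : Summable t :=
    summable_one_div_nat_add_one_sq.comp_injective (add_right_injective n)
  have hfactor (j : ℕ) : ‖1 - blaschkeFactor (zpt (n + j)) w‖ ≤ 2 / D * t j := by
    have habs : |1 - zpt (n + j)| = t j := by
      rw [one_sub_zpt, abs_of_pos (by positivity)]
    have htn : t j ≤ 1 / ((n : ℝ) + 1) ^ 2 := by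
      simp only [t]
      gcongr
      exact_mod_cast n.le_add_right j
    calc ‖1 - blaschkeFactor (zpt (n + j)) w‖
        ≤ 2 * |1 - zpt (n + j)| / (‖1 - w‖ - |1 - zpt (n + j)|) :=
          norm_one_sub_blaschkeFactor_le hw (by rw [habs]; linarith)
      _ ≤ 2 * t j / D := by
          rw [habs]
          gcongr
          exact sub_le_sub_left htn _
      _ = 2 / D * t j := by ring
  have hsum : Summable fun j ↦ ‖1 - blaschkeFactor (zpt (n + j)) w‖ :=
    (ht.mul_left _).of_nonneg_of_le (fun _ ↦ norm_nonneg _) hfactor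
  calc ‖1 - Bprod n w‖ ≤ ∑' j, ‖1 - blaschkeFactor (zpt (n + j)) w‖ :=
        norm_one_sub_tprod_le (fun j ↦ (norm_blaschkeFactor hw (abs_zpt_lt_one _)).le) hsum
    _ ≤ ∑' j, 2 / D * t j := hsum.tsum_le_tsum hfactor (ht.mul_left _)
    _ = 2 / D * ∑' j, t j := tsum_mul_left

theorem tendsto_Bprod_nhds_one {w : ℂ} (hw : ‖w‖ = 1) (hw1 : w ≠ 1) :
    Tendsto (fun n ↦ Bprod n w) atTop (𝓝 1) := by
  have hc : 0 < ‖1 - w‖ := norm_pos_iff.mpr (sub_ne_zero.mpr hw1.symm)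
  have hsq : Tendsto (fun n : ℕ ↦ 1 / ((n : ℝ) + 1) ^ 2) atTop (𝓝 0) := by
    simpa [one_div_pow] using (tendsto_one_div_add_atTop_nhds_zero_nat (𝕜 := ℝ)).pow 2
  have htail : Tendsto (fun n : ℕ ↦ ∑' j : ℕ, 1 / (((n + j : ℕ) : ℝ) + 1) ^ 2) atTop (𝓝 0) := by
    simpa only [add_comm _ (_ : ℕ)] using
      tendsto_sum_nat_add fun k : ℕ ↦ 1 / ((k : ℝ) + 1) ^ 2
  have hbound : Tendsto (fun n : ℕ ↦ 2 / (‖1 - w‖ - 1 / ((n : ℝ) + 1) ^ 2) *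
      ∑' j : ℕ, 1 / (((n + j : ℕ) : ℝ) + 1) ^ 2) atTop (𝓝 0) := by
    simpa using (tendsto_const_nhds.div (tendsto_const_nhds.sub hsq) (by simpa using hc.ne')).mul
      htail
  rw [tendsto_iff_norm_sub_tendsto_zero]
  refine squeeze_zero' (.of_forall fun _ ↦ norm_nonneg _) ?_ hbound
  filter_upwards [hsq.eventually (gt_mem_nhds hc)] with n hn
  rw [norm_sub_rev]
  exact norm_one_sub_Bprod_le hw hn

/-- For `w` on the unit circle with `w ≠ 1` and `n` with `1/(n+1)² < |1 - w|`, one has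
`|1 - B n w| ≤ (2 / (|1 - w| - 1/(n+1)²)) · ∑_{j ≥ n} 1/(j+1)²`; consequently
`B n w → 1` as `n → ∞` for every such `w`. -/
theorem stmt_13 :
    (∀ w : ℂ, ‖w‖ = 1 → w ≠ 1 → ∀ n : ℕ, 1 / ((n : ℝ) + 1) ^ 2 < ‖1 - w‖ →
      ‖1 - Bprod n w‖ ≤ 2 / (‖1 - w‖ - 1 / ((n : ℝ) + 1) ^ 2) *
        ∑' j : ℕ, 1 / (((n + j : ℕ) : ℝ) + 1) ^ 2) ∧
    (∀ w : ℂ, ‖w‖ = 1 → w ≠ 1 →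
      Filter.Tendsto (fun n : ℕ => Bprod n w) Filter.atTop (nhds 1)) :=
  ⟨fun _ hw _ _ hn ↦ norm_one_sub_Bprod_le hw hn, fun _ hw hw1 ↦ tendsto_Bprod_nhds_one hw hw1⟩
end
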